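/- An extension of profinite groups 1 → P → Δ → Γ → 1 with P pro-p and Γ pro-prime-to-p (i.e., of order coprime to p) splits: there exists a continuous homomorphism Γ → Δ which is a section of Δ → Γ. -/

import Mathlib

/-- We give `ZMod n` the discrete topology. -/
instance (n : ℕ) : TopologicalSpace (ZMod n) := ⊥
instance (n : ℕ) : DiscreteTopology (ZMod n) := ⟨rfl⟩
instance (n : ℕ) : ContinuousAdd (ZMod n) := ⟨continuous_of_discreteTopology⟩
instance (n : ℕ) : ContinuousNeg (ZMod n) := ⟨continuous_of_discreteTopology⟩

/-- A profinite group: compact, Hausdorff, totally disconnected topological group. -/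
def IsProfiniteGroup (G : Type*) [Group G] [TopologicalSpace G] [IsTopologicalGroup G] : Prop :=
  CompactSpace G ∧ TotallyDisconnectedSpace G ∧ T2Space G

/-- A pro-`p` group: a profinite group all of whose open subgroups have `p`-power index. -/
def IsProP (p : ℕ) (G : Type*) [Group G] [TopologicalSpace G] [IsTopologicalGroup G] : Prop :=
  IsProfiniteGroup G ∧ ∀ N : Subgroup G, IsOpen (N : Set G) → ∃ n : ℕ, N.index = p ^ n

/-- A family of elements of a topological group converges to `1` if all but finitely many
of them lie in any open neighbourhood of `1`. -/
def ConvergesToOne {X : Type*} {G : Type*} [Group G] [TopologicalSpace G] (f : X → G) : Prop :=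
  ∀ U : Set G, IsOpen U → (1 : G) ∈ U → {x : X | f x ∉ U}.Finite

/-- A free pro-`p` group: a pro-`p` group with a basis (converging to 1) satisfying the universal
property with respect to maps, converging to 1, into pro-`p` groups. -/
def IsFreeProP (p : ℕ) (F : Type*) [Group F] [TopologicalSpace F] [IsTopologicalGroup F] : Prop :=
  IsProP p F ∧ ∃ X : Set F,
    ∀ (G : Type) [Group G] [TopologicalSpace G] [IsTopologicalGroup G],
      IsProP p G → ∀ f : X → G, ConvergesToOne f →
        ∃! φ : F →* G, Continuous φ ∧ ∀ x : X, φ x.1 = f x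

/-- `H^1(G, ℤ/pℤ)` with trivial action: continuous (crossed = plain) homomorphisms `G → ℤ/pℤ`. -/
def H1set (p : ℕ) (G : Type*) [Group G] [TopologicalSpace G] : Set (G → ZMod p) :=
  {f | Continuous f ∧ ∀ x y : G, f (x * y) = f x + f y}

lemma relIndex_dvd_pow_of_proP {p : ℕ} {P : Type*} [Group P] [TopologicalSpace P]
    [IsTopologicalGroup P] (hProf : CompactSpace P ∧ TotallyDisconnectedSpace P ∧ T2Space P)
    (hP : ∀ W : Subgroup P, IsOpen (W : Set P) → ∃ n : ℕ, W.index = p ^ n)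
    (K V : Subgroup P) (O : Set P) (hO : IsOpen O)
    (hKO : (K : Set P) ∩ O = ((V ⊓ K : Subgroup P) : Set P)) :
    ∃ n : ℕ, V.relIndex K ∣ p ^ n := by
  obtain ⟨hc, htd, ht2⟩ := hProf
  have h1O : (1 : P) ∈ O := by
    have h1 : (1 : P) ∈ (K : Set P) ∩ O := by
      rw [hKO]; exact (V ⊓ K).one_mem
    exact h1.2
  obtain ⟨U, hU, h1U, hUO⟩ := compact_exists_isClopen_in_isOpen hO h1O
  obtain ⟨W, hW⟩ := IsTopologicalGroup.exist_openNormalSubgroup_sub_clopen_nhds_of_one hU h1U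
  obtain ⟨n, hn⟩ := hP W.toSubgroup W.isOpen
  refine ⟨n, ?_⟩
  have hWV : W.toSubgroup ⊓ K ≤ V ⊓ K := by
    intro x hx
    have hmem : x ∈ (K : Set P) ∩ O := ⟨hx.2, hUO (hW hx.1)⟩
    rw [hKO] at hmem
    exact hmem
  haveI : W.toSubgroup.Normal := W.isNormal'
  calc V.relIndex K = (V ⊓ K).relIndex K := (Subgroup.inf_relIndex_right V K).symm
    _ ∣ (W.toSubgroup ⊓ K).relIndex K := Subgroup.relIndex_dvd_of_le_left K hWV
    _ = W.toSubgroup.relIndex K := Subgroup.inf_relIndex_right _ K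
    _ ∣ W.toSubgroup.index := Subgroup.relIndex_dvd_index_of_normal _ K
    _ = p ^ n := hn

/-- Zorn: a minimal closed subgroup surjecting onto Γ exists. -/
lemma exists_minimal_closed_surjecting {Δ Γ : Type*} [Group Δ] [TopologicalSpace Δ]
    [IsTopologicalGroup Δ] [Group Γ] [TopologicalSpace Γ] [CompactSpace Δ] [T2Space Γ]
    (π : Δ →* Γ) (hπc : Continuous π) (hπs : Function.Surjective π) :
    ∃ H : Subgroup Δ, IsClosed (H : Set Δ) ∧ (∀ γ : Γ, ∃ d ∈ H, π d = γ) ∧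
      ∀ H' : Subgroup Δ, IsClosed (H' : Set Δ) → (∀ γ : Γ, ∃ d ∈ H', π d = γ) →
        H' ≤ H → H' = H := by
  set S : Set (Set Δ) :=
    {s | ∃ H : Subgroup Δ, (H : Set Δ) = s ∧ IsClosed s ∧ ∀ γ : Γ, ∃ d ∈ H, π d = γ} with hS
  have hstep : ∀ c ⊆ S, IsChain (· ⊆ ·) c → c.Nonempty → ∃ lb ∈ S, ∀ s ∈ c, lb ⊆ s := by
    intro c hcS hchain hcne
    set T : Set (Subgroup Δ) := {K : Subgroup Δ | (K : Set Δ) ∈ c} with hT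
    set H₀ : Subgroup Δ := sInf T with hH₀
    have hcoe : (H₀ : Set Δ) = ⋂₀ c := by
      rw [hH₀, Subgroup.coe_sInf]
      ext x
      simp only [Set.mem_iInter, Set.mem_sInter]
      constructor
      · intro hx s hs
        obtain ⟨K, hK, _, _⟩ := hcS hs
        have hxK : x ∈ (K : Set Δ) := hx K (by simp only [hT, Set.mem_setOf_eq, hK]; exact hs)
        rwa [hK] at hxK
      · intro hx K hK
        exact hx _ hK
    have hSclosed : ∀ s ∈ c, IsClosed s := by
      intro s hs
      obtain ⟨K, hK, hcl, _⟩ := hcS hs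
      exact hcl
    have hclosed : IsClosed (H₀ : Set Δ) := by
      rw [hcoe]
      exact isClosed_sInter hSclosed
    have hsurj : ∀ γ : Γ, ∃ d ∈ H₀, π d = γ := by
      intro γ
      haveI : Nonempty c := hcne.to_subtype
      have hne : (⋂ s : c, ((s : Set Δ) ∩ π ⁻¹' {γ})).Nonempty := by
        apply IsCompact.nonempty_iInter_of_directed_nonempty_isCompact_isClosed
        · rintro ⟨s, hs⟩ ⟨t, ht⟩
          rcases hchain.total hs ht with h | h
          · exact ⟨⟨s, hs⟩, Set.inter_subset_inter_left _ subset_rfl,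
              Set.inter_subset_inter_left _ h⟩
          · exact ⟨⟨t, ht⟩, Set.inter_subset_inter_left _ h,
              Set.inter_subset_inter_left _ subset_rfl⟩
        · rintro ⟨s, hs⟩
          obtain ⟨K, hK, _, hKs⟩ := hcS hs
          obtain ⟨d, hd, hdγ⟩ := hKs γ
          have hds : d ∈ s := by rw [← hK]; exact hd
          exact ⟨d, hds, hdγ⟩
        · rintro ⟨s, hs⟩
          exact ((hSclosed s hs).inter (IsClosed.preimage hπc isClosed_singleton)).isCompact
        · rintro ⟨s, hs⟩
          exact (hSclosed s hs).inter (IsClosed.preimage hπc isClosed_singleton)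
      obtain ⟨x, hx⟩ := hne
      refine ⟨x, ?_, ?_⟩
      · have : x ∈ ⋂₀ c := by
          intro s hs
          have := Set.mem_iInter.mp hx ⟨s, hs⟩
          exact this.1
        rw [← hcoe] at this
        exact this
      · have := Set.mem_iInter.mp hx ⟨hcne.choose, hcne.choose_spec⟩
        exact this.2
    exact ⟨(H₀ : Set Δ), ⟨H₀, rfl, hclosed, hsurj⟩, fun s hs => by
      rw [hcoe]; exact Set.sInter_subset_of_mem hs⟩
  have htop : (Set.univ : Set Δ) ∈ S := by
    refine ⟨⊤, by simp, isClosed_univ, fun γ => ?_⟩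
    obtain ⟨d, hd⟩ := hπs γ
    exact ⟨d, trivial, hd⟩
  obtain ⟨m, _, hmin⟩ := zorn_superset_nonempty S hstep _ htop
  obtain ⟨H, hHm, hHclosed, hHsurj⟩ := hmin.prop
  refine ⟨H, by rw [hHm]; exact hHclosed, hHsurj, ?_⟩
  intro H' hH'c hH's hle
  have hsub : m ⊆ (H' : Set Δ) :=
    hmin.2 ⟨H', rfl, hH'c, hH's⟩ (hHm ▸ (SetLike.coe_subset_coe.mpr hle))
  exact le_antisymm hle fun x hx => hsub (hHm ▸ hx)

/-- An extension of profinite groups `1 → P → Δ → Γ → 1` with `P` pro-`p` and `Γ` of order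
prime to `p` splits: there is a continuous homomorphism `Γ → Δ` which is a section of
`Δ → Γ`. Here the extension is presented by the continuous surjection `π : Δ → Γ` whose
kernel plays the role of `P`. -/
theorem extension_splits (p : ℕ) (hp : p.Prime)
    {Δ Γ : Type*} [Group Δ] [TopologicalSpace Δ] [IsTopologicalGroup Δ]
    [Group Γ] [TopologicalSpace Γ] [IsTopologicalGroup Γ]
    (hΔ : IsProfiniteGroup Δ) (hΓ : IsProfiniteGroup Γ)
    (π : Δ →* Γ) (hπc : Continuous π) (hπs : Function.Surjective π)
    (hker : IsProP p ↥(MonoidHom.ker π))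
    (hΓp' : ∀ N : Subgroup Γ, IsOpen (N : Set Γ) → ¬ p ∣ N.index) :
    ∃ σ : Γ →* Δ, Continuous σ ∧ π.comp σ = MonoidHom.id Γ := by
  obtain ⟨hΔc, hΔtd, hΔt2⟩ := hΔ
  obtain ⟨hΓc, hΓtd, hΓt2⟩ := hΓ
  obtain ⟨H, hHclosed, hHsurj, hHmin⟩ := exists_minimal_closed_surjecting π hπc hπs
  haveI : CompactSpace ↥H := isCompact_iff_compactSpace.mp hHclosed.isCompact
  set ρ : ↥H →* Γ := π.comp H.subtype with hρdef
  have hρc : Continuous ρ := hπc.comp continuous_subtype_val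
  have hρs : Function.Surjective ρ := by
    intro γ
    obtain ⟨d, hd, hdγ⟩ := hHsurj γ
    exact ⟨⟨d, hd⟩, hdγ⟩
  set Pk := MonoidHom.ker π with hPkdef
  have hK'eq : ρ.ker = Pk.subgroupOf H := by
    rw [hρdef, ← MonoidHom.comap_ker]
    rfl
  -- key claim: the kernel of ρ is trivial
  have hker_triv : ∀ k : ↥H, k ∈ ρ.ker → k = 1 := by
    intro k hk
    by_contra hk1
    obtain ⟨U, hU, h1U, hkU⟩ := exists_isClopen_of_totally_separated
      (show (1 : ↥H) ≠ k from fun h => hk1 h.symm)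
    obtain ⟨N', hN'U⟩ := IsTopologicalGroup.exist_openNormalSubgroup_sub_clopen_nhds_of_one hU h1U
    set N : Subgroup ↥H := N'.toSubgroup with hNdef
    haveI : N.Normal := N'.isNormal'
    have hNopen : IsOpen (N : Set ↥H) := N'.isOpen
    have hkN : k ∉ N := fun h => hkU (hN'U h)
    haveI : Finite (↥H ⧸ N) := N.quotient_finite_of_isOpen hNopen
    set φ : ↥H →* ↥H ⧸ N := QuotientGroup.mk' N with hφdef
    set K' : Subgroup ↥H := ρ.ker with hK'def
    set M : Subgroup (↥H ⧸ N) := K'.map φ with hMdef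
    haveI : M.Normal := Subgroup.Normal.map inferInstance φ (QuotientGroup.mk'_surjective N)
    set Nδ : Subgroup Δ := N.map H.subtype with hNδdef
    -- `N.relIndex K'` divides a power of `p`
    have hrel : ∃ n : ℕ, N.relIndex K' ∣ p ^ n := by
      obtain ⟨OΔ, hOΔ, hpre⟩ := isOpen_induced_iff.mp hNopen
      set O : Set ↥Pk := Subtype.val ⁻¹' OΔ with hOdef
      have heqset : ((H.subgroupOf Pk : Subgroup ↥Pk) : Set ↥Pk) ∩ O =
          ((Nδ.subgroupOf Pk ⊓ H.subgroupOf Pk : Subgroup ↥Pk) : Set ↥Pk) := by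
        ext x
        constructor
        · rintro ⟨hxH', hxO'⟩
          have hxH : (x : Δ) ∈ H := Subgroup.mem_subgroupOf.mp (SetLike.mem_coe.mp hxH')
          have hxO : (x : Δ) ∈ OΔ := hxO'
          have hmem : (⟨(x : Δ), hxH⟩ : ↥H) ∈ (N : Set ↥H) := by
            rw [← hpre]; exact hxO
          have hxN : x ∈ Nδ.subgroupOf Pk :=
            Subgroup.mem_subgroupOf.mpr (Subgroup.mem_map_of_mem H.subtype hmem)
          exact SetLike.mem_coe.mpr (Subgroup.mem_inf.mpr ⟨hxN, Subgroup.mem_subgroupOf.mpr hxH⟩)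
        · intro hx
          obtain ⟨hxN', hxH'⟩ := Subgroup.mem_inf.mp (SetLike.mem_coe.mp hx)
          have hxH : (x : Δ) ∈ H := Subgroup.mem_subgroupOf.mp hxH'
          refine ⟨SetLike.mem_coe.mpr hxH', ?_⟩
          obtain ⟨y, hy, hyx⟩ := Subgroup.mem_map.mp (Subgroup.mem_subgroupOf.mp hxN')
          have hyval : (⟨(x : Δ), hxH⟩ : ↥H) = y := Subtype.ext hyx.symm
          have hmem : (⟨(x : Δ), hxH⟩ : ↥H) ∈ (N : Set ↥H) := by rw [hyval]; exact hy
          rw [← hpre] at hmem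
          exact hmem
      obtain ⟨n, hdvd⟩ := relIndex_dvd_pow_of_proP hker.1 hker.2 (H.subgroupOf Pk)
        (Nδ.subgroupOf Pk) O (hOΔ.preimage continuous_subtype_val) heqset
      refine ⟨n, ?_⟩
      have h1 : (Nδ.subgroupOf Pk).relIndex (H.subgroupOf Pk) = Nδ.relIndex (H ⊓ Pk) := by
        rw [← Subgroup.inf_subgroupOf_right H Pk]
        exact Subgroup.relIndex_subgroupOf inf_le_right
      have h2 : N.relIndex K' = Nδ.relIndex (H ⊓ Pk) := by
        have e1 : Nδ.subgroupOf H = N :=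
          Subgroup.comap_map_eq_self_of_injective H.subtype_injective N
        have e2 : (H ⊓ Pk).subgroupOf H = K' := by
          rw [inf_comm, Subgroup.inf_subgroupOf_right, ← hK'eq]
        rw [← e1, ← e2]
        exact Subgroup.relIndex_subgroupOf inf_le_left
      rw [h2, ← h1]
      exact hdvd
    obtain ⟨n, hdvd⟩ := hrel
    -- card of `M`
    have hMindexEq : M.index = (K' ⊔ N).index := by
      rw [hMdef, Subgroup.index_map, QuotientGroup.ker_mk',
        MonoidHom.range_eq_top_of_surjective φ (QuotientGroup.mk'_surjective N),
        Subgroup.index_top, mul_one]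
    have hNind0 : N.index ≠ 0 := Subgroup.index_ne_zero_of_finite
    have hsup0 : (K' ⊔ N).index ≠ 0 := by
      intro h0
      exact hNind0 (Nat.eq_zero_of_zero_dvd (h0 ▸ Subgroup.index_dvd_of_le le_sup_right))
    have hcardM : Nat.card M = N.relIndex K' := by
      have h1 : Nat.card M * M.index = Nat.card (↥H ⧸ N) := M.card_mul_index
      rw [hMindexEq, ← Subgroup.index_eq_card,
        ← Subgroup.relIndex_mul_index (le_sup_right : N ≤ K' ⊔ N)] at h1
      have := Nat.eq_of_mul_eq_mul_right (Nat.pos_of_ne_zero hsup0) h1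
      rw [this, Subgroup.relIndex_sup_right]
    -- index of `M` is prime to `p`
    set Q : Subgroup Γ := N.map ρ with hQdef
    have hQind : (K' ⊔ N).index = Q.index := by
      have e : Q.comap ρ = N ⊔ K' := by rw [hQdef, Subgroup.comap_map_eq]
      rw [← Subgroup.index_comap_of_surjective Q hρs, e, sup_comm]
    have hQclosed : IsClosed (Q : Set Γ) := by
      have hNc : IsCompact (N : Set ↥H) := (Subgroup.isClosed_of_isOpen N hNopen).isCompact
      have : (Q : Set Γ) = ρ '' (N : Set ↥H) := rfl
      rw [this]
      exact (hNc.image hρc).isClosed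
    haveI : Q.FiniteIndex := ⟨by rw [← hQind]; exact hsup0⟩
    have hQopen : IsOpen (Q : Set Γ) := Subgroup.isOpen_of_isClosed_of_finiteIndex Q hQclosed
    have hMind : ¬ p ∣ M.index := by
      rw [hMindexEq, hQind]
      exact hΓp' Q hQopen
    have hcop : Nat.Coprime (Nat.card M) M.index := by
      obtain ⟨m, _, hm⟩ := (Nat.dvd_prime_pow hp).mp (hcardM ▸ hdvd)
      rw [hm]
      exact Nat.Coprime.pow_left m ((Nat.Prime.coprime_iff_not_dvd hp).mpr hMind)
    obtain ⟨C, hC⟩ := Subgroup.exists_right_complement'_of_coprime hcop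
    set L : Subgroup ↥H := C.comap φ with hLdef
    have hNL : N ≤ L := by
      intro x hx
      have hx1 : φ x = 1 := (QuotientGroup.eq_one_iff x).mpr hx
      show φ x ∈ C
      rw [hx1]
      exact C.one_mem
    have hLopen : IsOpen (L : Set ↥H) := Subgroup.isOpen_mono hNL hNopen
    have hLclosed : IsClosed (L : Set ↥H) := Subgroup.isClosed_of_isOpen L hLopen
    set Lδ : Subgroup Δ := L.map H.subtype with hLδdef
    have hLδclosed : IsClosed (Lδ : Set Δ) := by
      have hLc : IsCompact (L : Set ↥H) := hLclosed.isCompact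
      have : (Lδ : Set Δ) = Subtype.val '' (L : Set ↥H) := rfl
      rw [this]
      exact (hLc.image continuous_subtype_val).isClosed
    have hLδsurj : ∀ γ : Γ, ∃ d ∈ Lδ, π d = γ := by
      intro γ
      obtain ⟨h, hh⟩ := hρs γ
      obtain ⟨⟨mc, cc⟩, hmc⟩ := (hC.existsUnique (φ h)).exists
      obtain ⟨kk, hkk, hkkeq⟩ := mc.2
      refine ⟨((kk⁻¹ * h : ↥H) : Δ), ?_, ?_⟩
      · refine ⟨kk⁻¹ * h, ?_, rfl⟩
        show φ (kk⁻¹ * h) ∈ C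
        have he1 : φ (kk⁻¹ * h) = (mc : ↥H ⧸ N)⁻¹ * φ h := by
          rw [map_mul, map_inv, hkkeq]
        rw [he1, ← hmc, inv_mul_cancel_left]
        exact cc.2
      · show ρ (kk⁻¹ * h) = γ
        have hkk1 : ρ kk = 1 := hkk
        rw [map_mul, map_inv, hkk1, hh, inv_one, one_mul]
    have hLδH : Lδ ≤ H := Subgroup.map_subtype_le L
    have hLδeq : Lδ = H := hHmin Lδ hLδclosed hLδsurj hLδH
    have hkL : k ∈ L := by
      have hkLδ : (k : Δ) ∈ Lδ := by rw [hLδeq]; exact k.2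
      obtain ⟨l, hl, hlk⟩ := hkLδ
      have : l = k := Subtype.ext hlk
      rwa [this] at hl
    have hφkC : φ k ∈ C := hkL
    have hφkM : φ k ∈ M := Subgroup.mem_map_of_mem φ hk
    have hφk1 : φ k = 1 := by
      have := hC.disjoint.le_bot (Subgroup.mem_inf.mpr ⟨hφkM, hφkC⟩ :
        φ k ∈ M ⊓ C)
      exact Subgroup.mem_bot.mp this
    exact hkN ((QuotientGroup.eq_one_iff k).mp hφk1)
  -- assemble the section
  have hinj : Function.Injective ρ := by
    rw [← MonoidHom.ker_eq_bot_iff]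
    exact (Subgroup.eq_bot_iff_forall _).mpr hker_triv
  let e : ↥H ≃* Γ := MulEquiv.ofBijective ρ ⟨hinj, hρs⟩
  have hec : Continuous (e : ↥H → Γ) := hρc
  let homeo : ↥H ≃ₜ Γ := Continuous.homeoOfEquivCompactToT2 (f := e.toEquiv) hec
  refine ⟨H.subtype.comp e.symm.toMonoidHom, ?_, ?_⟩
  · exact continuous_subtype_val.comp homeo.symm.continuous
  · ext γ
    show π ((e.symm γ : ↥H) : Δ) = γ
    exact e.apply_symm_apply γ
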